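/- arXiv:2410.15906 — 6 statements merged into one kernel-verified Lean document; each statement's English description precedes it below -/
import Mathlib

section
/- Let a be a binary relation on X and n ≥ 1 a natural number. Then a is an injective partial function if and only if the n-fold composition of K_L(a) = a ; a⁻¹ with itself is contained in the identity relation, and the n-fold composition of K_R(a) = a⁻¹ ; a with itself is contained in the identity relation. -/
variable {X : Type*}

/-- Relational composition: (x,y) ∈ comp r s ↔ ∃ z, (x,z) ∈ r ∧ (z,y) ∈ s. -/
def Rel.comp' (r s : Set (X × X)) : Set (X × X) :=
  {p | ∃ z, (p.1, z) ∈ r ∧ (z, p.2) ∈ s}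

/-- Relational converse. -/
def Rel.inv' (r : Set (X × X)) : Set (X × X) := {p | (p.2, p.1) ∈ r}

/-- A functional relation. -/
def Rel.Functional (r : Set (X × X)) : Prop :=
  ∀ x y z : X, (x, y) ∈ r → (x, z) ∈ r → y = z

/-- An injective relation. -/
def Rel.Injective' (r : Set (X × X)) : Prop :=
  ∀ x y z : X, (x, z) ∈ r → (y, z) ∈ r → x = y

/-- An injective partial function. -/
def Rel.IsPIF (r : Set (X × X)) : Prop := Rel.Functional r ∧ Rel.Injective' r

/-- n-fold iterated relational composition of r with itself (compPow r 1 = r). -/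
def Rel.compPow (r : Set (X × X)) : ℕ → Set (X × X)
  | 0 => r
  | n + 1 => Rel.comp' r (Rel.compPow r n)

lemma compPow_sub_id (r : Set (X × X)) (h : r ⊆ {p : X × X | p.1 = p.2}) (m : ℕ) :
    Rel.compPow r m ⊆ {p : X × X | p.1 = p.2} := by
  induction m with
  | zero => exact h
  | succ k ih =>
    rintro ⟨x, y⟩ ⟨z, hxz, hzy⟩
    have h1 : x = z := h hxz
    have h2 : z = y := ih hzy
    exact h1.trans h2

lemma mem_compPow (r : Set (X × X)) (hrefl : ∀ x y, (x, y) ∈ r → (x, x) ∈ r)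
    (m : ℕ) {x y : X} (hxy : (x, y) ∈ r) : (x, y) ∈ Rel.compPow r m := by
  induction m with
  | zero => exact hxy
  | succ k ih => exact ⟨x, hrefl x y hxy, ih⟩

theorem pif_iff_iterated_kernels_subset_id (a : Set (X × X)) (n : ℕ) (hn : 1 ≤ n) :
    Rel.IsPIF a ↔
      (Rel.compPow (Rel.comp' a (Rel.inv' a)) (n - 1) ⊆ {p : X × X | p.1 = p.2} ∧
       Rel.compPow (Rel.comp' (Rel.inv' a) a) (n - 1) ⊆ {p : X × X | p.1 = p.2}) := by
  have hreflL : ∀ x y, (x, y) ∈ Rel.comp' a (Rel.inv' a) → (x, x) ∈ Rel.comp' a (Rel.inv' a) := by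
    rintro x y ⟨z, h1, _⟩
    exact ⟨z, h1, h1⟩
  have hreflR : ∀ x y, (x, y) ∈ Rel.comp' (Rel.inv' a) a → (x, x) ∈ Rel.comp' (Rel.inv' a) a := by
    rintro x y ⟨z, h1, _⟩
    exact ⟨z, h1, h1⟩
  constructor
  · rintro ⟨hf, hi⟩
    constructor
    · apply compPow_sub_id
      rintro ⟨x, y⟩ ⟨z, hxz, hyz⟩
      exact hi x y z hxz hyz
    · apply compPow_sub_id
      rintro ⟨x, y⟩ ⟨z, hzx, hzy⟩
      exact hf z x y hzx hzy
  · rintro ⟨hL, hR⟩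
    constructor
    · intro x y z h1 h2
      exact hR (mem_compPow _ hreflR (n - 1) ⟨x, h1, h2⟩)
    · intro x y z h1 h2
      exact hL (mem_compPow _ hreflL (n - 1) ⟨z, h1, h2⟩)
end

section
/- Let X be a set with at least 2 elements, let 0' be the diversity relation on X, let u = X × X be the universal relation, and let complement be taken relative to u. A binary relation a on X is an injective partial function if and only if (−(a ; 0')) ; u ; (−(0' ; a)) = u. -/
variable {X : Type*}

theorem pif_iff_complement_equation [Nontrivial X] (a : Set (X × X)) :
    Rel.IsPIF a ↔
      Rel.comp'
        (Rel.comp' (Rel.comp' a {p : X × X | p.1 ≠ p.2})ᶜ (Set.univ : Set (X × X)))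
        (Rel.comp' {p : X × X | p.1 ≠ p.2} a)ᶜ = (Set.univ : Set (X × X)) := by
  constructor
  · rintro ⟨hf, hi⟩
    ext ⟨x, y⟩
    simp only [Set.mem_univ, iff_true]
    obtain ⟨w, hw⟩ : ∃ w, ∀ v, (x, v) ∈ a → v = w := by
      by_cases h : ∃ v, (x, v) ∈ a
      · obtain ⟨v, hv⟩ := h
        exact ⟨v, fun u hu => hf x u v hu hv⟩
      · exact ⟨x, fun u hu => absurd ⟨u, hu⟩ h⟩
    obtain ⟨z, hz⟩ : ∃ z, ∀ v, (v, y) ∈ a → v = z := by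
      by_cases h : ∃ v, (v, y) ∈ a
      · obtain ⟨v, hv⟩ := h
        exact ⟨v, fun u hu => hi u v y hu hv⟩
      · exact ⟨y, fun u hu => absurd ⟨u, hu⟩ h⟩
    refine ⟨z, ⟨w, ?_, trivial⟩, ?_⟩
    · rintro ⟨v, hv, hne⟩
      exact hne (hw v hv)
    · rintro ⟨v, hne, hva⟩
      exact hne (hz v hva).symm
  · intro h
    rw [Set.eq_univ_iff_forall] at h
    constructor
    · intro x y z hy hz
      obtain ⟨_, ⟨w, hw, _⟩, _⟩ := h (x, x)
      have h1 : y = w := by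
        by_contra h'
        exact hw ⟨y, hy, h'⟩
      have h2 : z = w := by
        by_contra h'
        exact hw ⟨z, hz, h'⟩
      rw [h1, h2]
    · intro x y z hx hy
      obtain ⟨t, _, ht⟩ := h (z, z)
      have h1 : t = x := by
        by_contra h'
        exact ht ⟨x, h', hx⟩
      have h2 : t = y := by
        by_contra h'
        exact ht ⟨y, h', hy⟩
      rw [← h1, h2]
end

section
/- Let R be a collection of binary relations on a set X closed under composition and under complementation relative to X×X. Suppose e ∈ R satisfies e ; e = e, (−e) ; e = −e, and e ; (−e) = −e. Then e is a nonempty symmetric and transitive relation (a nonempty local equivalence relation). -/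
variable {X : Type*}

theorem local_equiv_from_complement_equations [Nonempty X]
    (R : Set (Set (X × X)))
    (hcomp : ∀ r s : Set (X × X), r ∈ R → s ∈ R → Rel.comp' r s ∈ R)
    (hcompl : ∀ r : Set (X × X), r ∈ R → rᶜ ∈ R)
    (e : Set (X × X)) (he : e ∈ R)
    (h1 : Rel.comp' e e = e)
    (h2 : Rel.comp' eᶜ e = eᶜ)
    (h3 : Rel.comp' e eᶜ = eᶜ) :
    e ≠ ∅ ∧ (∀ x y : X, (x, y) ∈ e → (y, x) ∈ e) ∧
      (∀ x y z : X, (x, y) ∈ e → (y, z) ∈ e → (x, z) ∈ e) := by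
  -- left Euclidean: (x,z)∈e ∧ (x,y)∈e → (z,y)∈e
  have hL : ∀ x y z : X, (x, z) ∈ e → (x, y) ∈ e → (z, y) ∈ e := by
    intro x y z hxz hxy
    by_contra hzy
    have : (x, y) ∈ Rel.comp' e eᶜ := ⟨z, hxz, hzy⟩
    rw [h3] at this
    exact this hxy
  -- right Euclidean: (a,c)∈e ∧ (b,c)∈e → (a,b)∈e
  have hR : ∀ a b c : X, (a, c) ∈ e → (b, c) ∈ e → (a, b) ∈ e := by
    intro a b c hac hbc
    by_contra hab
    have : (a, c) ∈ Rel.comp' eᶜ e := ⟨b, hab, hbc⟩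
    rw [h2] at this
    exact this hac
  refine ⟨?_, ?_, ?_⟩
  · intro hemp
    obtain ⟨x⟩ := ‹Nonempty X›
    have hx : (x, x) ∈ eᶜ := by rw [hemp]; simp
    rw [← h2] at hx
    obtain ⟨z, _, hz⟩ := hx
    rw [hemp] at hz
    exact hz
  · intro x y hxy
    exact hR y x y (hL x y y hxy hxy) hxy
  · intro x y z hxy hyz
    have : (x, z) ∈ Rel.comp' e e := ⟨y, hxy, hyz⟩
    rwa [h1] at this
end

section
/- Let X be a nonempty set and e a binary relation on X satisfying e ; e = e, (−e) ; e = −e = e ; (−e), and (−e) ; (−e) = −e, where − denotes complementation in X×X and ; is relational composition. Then e = X×X (e is the universal relation) and −e = ∅. -/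
variable {X : Type*}

theorem universal_from_complement_equations [Nonempty X] (e : Set (X × X))
    (h1 : Rel.comp' e e = e)
    (h2 : Rel.comp' eᶜ e = eᶜ)
    (h3 : Rel.comp' e eᶜ = eᶜ)
    (h4 : Rel.comp' eᶜ eᶜ = eᶜ) :
    e = (Set.univ : Set (X × X)) ∧ eᶜ = (∅ : Set (X × X)) := by
  have hempty : eᶜ = (∅ : Set (X × X)) := by
    by_contra h
    obtain ⟨⟨a, b⟩, hab⟩ := Set.nonempty_iff_ne_empty.mpr h
    have haa : (a, a) ∈ eᶜ := by
      by_cases hba : (b, a) ∈ e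
      · rw [← h2]; exact ⟨b, hab, hba⟩
      · rw [← h4]; exact ⟨b, hab, hba⟩
    have : (a, a) ∈ Rel.comp' eᶜ e := by rw [h2]; exact haa
    obtain ⟨z, haz, hza⟩ := this
    have : (z, a) ∈ eᶜ := by rw [← h3]; exact ⟨a, hza, haa⟩
    exact this hza
  refine ⟨?_, hempty⟩
  rw [← compl_compl e, hempty, Set.compl_empty]
end

section
/- A binary relation r on a finite set X is the kernel of some binary relation on X (i.e., r = s ; s⁻¹ for some s ⊆ X×X) if and only if r is symmetric, reflexive on its domain, and there is a family of at most |X| cliques of r covering all pairs of r (a clique being a set C such that C×C ⊆ r). -/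
variable {X : Type*}

theorem kernel_problem_characterisation [Fintype X] (r : Set (X × X)) :
    (∃ s : Set (X × X), r = Rel.comp' s (Rel.inv' s)) ↔
      ((∀ x y : X, (x, y) ∈ r → (y, x) ∈ r) ∧
       (∀ x y : X, (x, y) ∈ r → (x, x) ∈ r) ∧
       (∃ C : X → Set X,
          (∀ i : X, ∀ x ∈ C i, ∀ y ∈ C i, (x, y) ∈ r) ∧
          (∀ p ∈ r, ∃ i : X, p.1 ∈ C i ∧ p.2 ∈ C i))) := by
  constructor
  · rintro ⟨s, rfl⟩
    refine ⟨fun x y ⟨z, hx, hy⟩ => ⟨z, hy, hx⟩,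
            fun x y ⟨z, hx, _⟩ => ⟨z, hx, hx⟩,
            fun i => {x | (x, i) ∈ s}, ?_, ?_⟩
    · exact fun i x hx y hy => ⟨i, hx, hy⟩
    · rintro ⟨x, y⟩ ⟨z, hx, hy⟩; exact ⟨z, hx, hy⟩
  · rintro ⟨_, _, C, hclique, hcover⟩
    refine ⟨{p | p.1 ∈ C p.2}, Set.ext fun ⟨x, y⟩ => ?_⟩
    constructor
    · intro h; exact hcover _ h
    · rintro ⟨i, hx, hy⟩; exact hclique i x hx y hy
end

section
/- Let G be a group with |G| ≥ 3 and let g ∈ G, i,j ∈ {0,1,2}. Consider the relation r = ({i}×G) × ({j}×G) \ g_{i,j}^θ on X = {0,1,2}×G, where g_{i,j}^θ = {((i,h),(j,h*g)) : h ∈ G}. Then K_L(r) = r ; r⁻¹ = ({i}×G) × ({i}×G). -/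
variable {X : Type*}

/-- The relation g_{i,j}^θ = {((i,h),(j,h*g)) : h ∈ G} on (Fin 3) × G. -/
def relTheta {G : Type*} [Group G] (i j : Fin 3) (g : G) :
    Set ((Fin 3 × G) × (Fin 3 × G)) :=
  {p | ∃ h : G, p.1 = (i, h) ∧ p.2 = (j, h * g)}

theorem kernel_of_complemented_relTheta {G : Type*} [Group G]
    (hcard : ∃ a b c : G, a ≠ b ∧ a ≠ c ∧ b ≠ c)
    (i j : Fin 3) (g : G) :
    Rel.comp'
      ({p : (Fin 3 × G) × (Fin 3 × G) | p.1.1 = i ∧ p.2.1 = j} \ relTheta i j g)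
      (Rel.inv' ({p : (Fin 3 × G) × (Fin 3 × G) | p.1.1 = i ∧ p.2.1 = j} \ relTheta i j g))
      = {p : (Fin 3 × G) × (Fin 3 × G) | p.1.1 = i ∧ p.2.1 = i} := by
  ext ⟨x, y⟩
  simp only [Rel.comp', Rel.inv', Set.mem_setOf_eq, Set.mem_diff, relTheta]
  constructor
  · rintro ⟨z, ⟨⟨hx, _⟩, _⟩, ⟨hy, _⟩, _⟩
    exact ⟨hx, hy⟩
  · rintro ⟨hx, hy⟩
    obtain ⟨a, b, c, hab, hac, hbc⟩ := hcard
    -- pick k ∈ G with k ≠ x.2 * g and k ≠ y.2 * g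
    have : ∃ k : G, k ≠ x.2 * g ∧ k ≠ y.2 * g := by
      by_contra h
      push_neg at h
      have ha := h a; have hb := h b; have hc := h c
      rcases eq_or_ne a (x.2 * g) with h1 | h1 <;>
        rcases eq_or_ne b (x.2 * g) with h2 | h2 <;>
        rcases eq_or_ne c (x.2 * g) with h3 | h3 <;>
        simp_all
    obtain ⟨k, hk1, hk2⟩ := this
    refine ⟨(j, k), ⟨⟨hx, rfl⟩, ?_⟩, ⟨⟨hy, rfl⟩, ?_⟩⟩
    · rintro ⟨h, h1, h2⟩
      apply hk1
      have := congrArg Prod.snd h1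
      have := congrArg Prod.snd h2
      simp_all
    · rintro ⟨h, h1, h2⟩
      apply hk2
      have := congrArg Prod.snd h1
      have := congrArg Prod.snd h2
      simp_all
end
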